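/- Let G be a residually finite group and a ∈ G an element such that the cyclic subgroup ⟨a⟩ has finite index in the centralizer C_G(a) and such that C_G(a) is dense in C_Ĝ(a) (i.e. the closure of C_G(a) in the profinite completion Ĝ equals C_Ĝ(a)). Then C_Ĝ(a) = cl(⟨a⟩)·C_G(a), where cl(⟨a⟩) is the closure of ⟨a⟩ in Ĝ. Consequently, for any subgroup A of G containing a, one has C_Ĝ(a)·G = (Ā ∩ C_Ĝ(a))·G as subsets of Ĝ. -/

import Mathlib

open Pointwise

universe u

variable (G : Type u) [Group G]

/-- The (finite-index normal subgroup) index set for the product of all finite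
quotients of `G`. -/
abbrev FinIndexNormal := {N : Subgroup G // N.Normal ∧ N.FiniteIndex}

instance (N : FinIndexNormal G) : N.1.Normal := N.2.1

/-- The product of all finite quotients of `G`, each taken with the discrete
topology, with the product topology. -/
abbrev FinQuotProd := ∀ N : FinIndexNormal G, G ⧸ N.1

instance (N : FinIndexNormal G) : TopologicalSpace (G ⧸ N.1) := ⊥
instance (N : FinIndexNormal G) : DiscreteTopology (G ⧸ N.1) := ⟨rfl⟩
instance (N : FinIndexNormal G) : IsTopologicalGroup (G ⧸ N.1) where
  continuous_mul := continuous_of_discreteTopology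
  continuous_inv := continuous_of_discreteTopology

/-- The natural homomorphism from `G` to the product of all of its finite
quotients. -/
def toFinQuot : G →* FinQuotProd G := Pi.monoidHom fun N => QuotientGroup.mk' N.1

/-- The profinite completion `Ĝ` of `G`, realized as the closure of the image of
the natural homomorphism `G → ∏ G/N` over all finite-index normal subgroups `N`. -/
def profComp : Subgroup (FinQuotProd G) := (toFinQuot G).range.topologicalClosure

/-- The profinite completion of `G` as a topological group. -/
abbrev ProfComp := ↥(profComp G)

/-- The natural map `ι : G → Ĝ` (it has dense image). -/
def iota : G →* ProfComp G :=
  (toFinQuot G).codRestrict (profComp G) fun g =>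
    Subgroup.le_topologicalClosure _ ⟨g, rfl⟩

/-- The closure `H̄` in the profinite completion `Ĝ` of (the image of) a
subgroup `H ≤ G`. -/
def clSub (H : Subgroup G) : Subgroup (ProfComp G) :=
  (H.map (iota G)).topologicalClosure

/-- `G` is residually finite if the natural map `G → Ĝ` is injective. -/
def ResiduallyFinite : Prop := Function.Injective (iota G)

/-- A residually finite group `G` is *adjustable* if for every pair of finitely
generated subgroups `A, B ≤ G` and every `γ ∈ Ĝ` with `γ⁻¹ Ā γ = B̄`, there is
`β ∈ B̄` and a nontrivial `a ∈ A` with `(γβ)⁻¹ a (γβ) ∈ B`. -/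
def Adjustable : Prop :=
  ResiduallyFinite G ∧
    ∀ (A B : Subgroup G), A.FG → B.FG → ∀ γ : ProfComp G,
      (clSub G A).map (MulAut.conj γ⁻¹).toMonoidHom = clSub G B →
      ∃ β ∈ clSub G B, ∃ a ∈ A, a ≠ (1 : G) ∧
        (γ * β)⁻¹ * iota G a * (γ * β) ∈ B.map (iota G)

/-- A subgroup `H ≤ G` is separable if every `g ∉ H` is separated from `H` in
some finite quotient of `G`. -/
def SeparableSubgroup (H : Subgroup G) : Prop :=
  ∀ g : G, g ∉ H →
    ∃ (Q : Type u) (_ : Group Q) (_ : Finite Q) (φ : G →* Q),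
      Function.Surjective φ ∧ φ g ∉ H.map φ

/-- `G` is subgroup separable (LERF) if every finitely generated subgroup is
separable. -/
def SubgroupSeparable : Prop :=
  ∀ H : Subgroup G, H.FG → SeparableSubgroup G H

/-- `G` is conjugacy separable if non-conjugate elements remain non-conjugate in
some finite quotient. -/
def ConjugacySeparable : Prop :=
  ∀ a b : G, ¬ IsConj a b →
    ∃ (Q : Type u) (_ : Group Q) (_ : Finite Q) (φ : G →* Q),
      Function.Surjective φ ∧ ¬ IsConj (φ a) (φ b)

/-- `G` is subgroup conjugacy separable if any two finitely generated subgroups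
that are not conjugate in `G` have non-conjugate images in some finite quotient
of `G`. -/
def SubgroupConjugacySeparable : Prop :=
  ∀ H K : Subgroup G, H.FG → K.FG →
    (¬ ∃ g : G, H.map (MulAut.conj g).toMonoidHom = K) →
    ∃ (Q : Type u) (_ : Group Q) (_ : Finite Q) (φ : G →* Q),
      Function.Surjective φ ∧
        ¬ ∃ q : Q, (H.map φ).map (MulAut.conj q).toMonoidHom = K.map φ

/-!
`C_Ĝ(a)` is the closure of `C_G(a)`. As `⟨a⟩` has finite index in `C_G(a)`, the latter is
covered by finitely many cosets `⟨a⟩c` with `c ∈ C_G(a)`; the sets `cl⟨a⟩·c` are closed and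
finitely many, so the closure of `C_G(a)` lies in `cl⟨a⟩·C_G(a)`. For the second claim,
`cl⟨a⟩ ≤ Ā ∩ C_Ĝ(a)` and `C_G(a)·G = G`.
-/

namespace Subgroup

variable {G : Type*} [Group G]

theorem zpowers_le_centralizer_singleton (a : G) : zpowers a ≤ centralizer {a} :=
  zpowers_le.mpr (mem_centralizer_singleton_iff.mpr rfl)

theorem exists_finite_subset_mul_of_finiteIndex {H K : Subgroup G}
    [(H.subgroupOf K).FiniteIndex] :
    ∃ S : Set G, S.Finite ∧ S ⊆ K ∧ (K : Set G) ⊆ H * S := by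
  have := finite_quotient_of_finiteIndex (H := H.subgroupOf K)
  refine ⟨Set.range fun q : K ⧸ H.subgroupOf K => ((q.out⁻¹ : K) : G),
    Set.finite_range _, Set.range_subset_iff.mpr fun q => (q.out⁻¹).2, fun c hc => ?_⟩
  -- `c⁻¹` lies in the left coset `r H` of its representative `r`, so `c ∈ H r⁻¹`
  set r : K := (QuotientGroup.mk (⟨c, hc⟩⁻¹ : K) : K ⧸ H.subgroupOf K).out
  have hr : r⁻¹ * ⟨c, hc⟩⁻¹ ∈ H.subgroupOf K := QuotientGroup.eq.mp (QuotientGroup.out_eq' _)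
  refine ⟨((r⁻¹ * ⟨c, hc⟩⁻¹)⁻¹ : K), mem_subgroupOf.mp (inv_mem hr),
    ((r⁻¹ : K) : G), ⟨_, rfl⟩, ?_⟩
  simp

theorem coe_mul_eq_coe_mul_of_le {P Q R : Subgroup G} (hQP : Q ≤ P)
    (hPQR : (P : Set G) ⊆ Q * R) : (P : Set G) * R = Q * R := by
  refine subset_antisymm ?_ (by grw [hQP])
  calc (P : Set G) * R ⊆ Q * R * R := by grw [hPQR]
    _ = Q * R := by rw [mul_assoc]; exact congrArg _ R.toSubmonoid.coe_mul_self_eq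

end Subgroup

section TopologicalGroup

variable {G X : Type*} [Group G] [Group X] [TopologicalSpace X] [IsTopologicalGroup X]

theorem closure_image_eq_closure_image_mul_image (φ : G →* X) {H K : Subgroup G} (hHK : H ≤ K)
    [(H.subgroupOf K).FiniteIndex] :
    closure (φ '' K) = closure (φ '' H) * φ '' K := by
  refine subset_antisymm ?_ ?_
  · obtain ⟨S, hS, hSK, hKHS⟩ :=
      Subgroup.exists_finite_subset_mul_of_finiteIndex (H := H) (K := K)
    have hclosed : IsClosed (closure (φ '' H) * φ '' S) :=
      isClosed_closure.mul_right_of_isCompact (hS.image φ).isCompact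
    calc closure (φ '' K)
        ⊆ closure (φ '' H) * φ '' S := by
          refine closure_minimal ?_ hclosed
          grw [hKHS, Set.image_mul, ← subset_closure]
      _ ⊆ closure (φ '' H) * φ '' K := by grw [hSK]
  · rintro _ ⟨x, hx, y, hy, rfl⟩
    exact (K.map φ).topologicalClosure.mul_mem (closure_mono (Set.image_mono hHK) hx)
      (subset_closure hy)

end TopologicalGroup

theorem centralizer_iota_eq_clSub_zpowers_mul_image {G : Type u} [Group G] (a : G)
    (hfin : ((Subgroup.zpowers a).subgroupOf (Subgroup.centralizer {a})).FiniteIndex)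
    (hdense : ((Subgroup.centralizer {a}).map (iota G)).topologicalClosure =
      Subgroup.centralizer {iota G a}) :
    (Subgroup.centralizer {iota G a} : Set (ProfComp G)) =
        (clSub G (Subgroup.zpowers a) : Set (ProfComp G)) *
          (⇑(iota G) '' (Subgroup.centralizer {a} : Set G)) := by
  rw [← hdense, clSub, Subgroup.topologicalClosure_coe, Subgroup.topologicalClosure_coe,
    Subgroup.coe_map, Subgroup.coe_map]
  exact closure_image_eq_closure_image_mul_image _ (Subgroup.zpowers_le_centralizer_singleton a)

theorem statement_3_general (G : Type u) [Group G] (a : G)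
    (hfin : ((Subgroup.zpowers a).subgroupOf (Subgroup.centralizer {a})).FiniteIndex)
    (hdense : ((Subgroup.centralizer {a}).map (iota G)).topologicalClosure =
      Subgroup.centralizer {iota G a}) :
    (Subgroup.centralizer {iota G a} : Set (ProfComp G)) =
        (clSub G (Subgroup.zpowers a) : Set (ProfComp G)) *
          (⇑(iota G) '' (Subgroup.centralizer {a} : Set G)) ∧
      ∀ A : Subgroup G, a ∈ A →
        (Subgroup.centralizer {iota G a} : Set (ProfComp G)) * Set.range ⇑(iota G) =
          ((clSub G A ⊓ Subgroup.centralizer {iota G a} : Subgroup (ProfComp G)) :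
              Set (ProfComp G)) * Set.range ⇑(iota G) := by
  have hcent := centralizer_iota_eq_clSub_zpowers_mul_image a hfin hdense
  refine ⟨hcent, fun A hA => ?_⟩
  have hZA : clSub G (Subgroup.zpowers a) ≤ clSub G A :=
    Subgroup.topologicalClosure_mono (Subgroup.map_mono (Subgroup.zpowers_le.mpr hA))
  have hZC : clSub G (Subgroup.zpowers a) ≤ Subgroup.centralizer {iota G a} :=
    hdense ▸ Subgroup.topologicalClosure_mono
      (Subgroup.map_mono (Subgroup.zpowers_le_centralizer_singleton a))
  rw [← MonoidHom.coe_range]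
  refine Subgroup.coe_mul_eq_coe_mul_of_le inf_le_right ?_
  rw [hcent]
  exact Set.mul_subset_mul (le_inf hZA hZC) (Set.image_subset_range _ _)

/-- If `G` is residually finite, `⟨a⟩` has finite index in `C_G(a)`
and `C_G(a)` is dense in `C_Ĝ(a)`, then `C_Ĝ(a) = cl(⟨a⟩)·C_G(a)`, and
consequently for every subgroup `A` containing `a` one has
`C_Ĝ(a)·G = (Ā ∩ C_Ĝ(a))·G` in `Ĝ`. -/
theorem statement_3 (G : Type u) [Group G] (hRF : ResiduallyFinite G) (a : G)
    (hfin : ((Subgroup.zpowers a).subgroupOf (Subgroup.centralizer {a})).FiniteIndex)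
    (hdense : ((Subgroup.centralizer {a}).map (iota G)).topologicalClosure =
      Subgroup.centralizer {iota G a}) :
    (Subgroup.centralizer {iota G a} : Set (ProfComp G)) =
        (clSub G (Subgroup.zpowers a) : Set (ProfComp G)) *
          (⇑(iota G) '' (Subgroup.centralizer {a} : Set G)) ∧
      ∀ A : Subgroup G, a ∈ A →
        (Subgroup.centralizer {iota G a} : Set (ProfComp G)) * Set.range ⇑(iota G) =
          ((clSub G A ⊓ Subgroup.centralizer {iota G a} : Subgroup (ProfComp G)) :
              Set (ProfComp G)) * Set.range ⇑(iota G) :=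
  statement_3_general G a hfin hdense
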